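/- Let k be a field of characteristic p > 0 and let m, r be natural numbers. Every operation θ from H^{m+1,m} to H^{r,r} over k is constant: there exists c ∈ H^{r,r}(k) such that θ_E(x) = c_E for every field extension E of k and every x ∈ H^{m+1,m}(E). In particular every normalized operation from H^{m+1,m} to H^{r,r} is zero. -/

import Mathlib

set_option linter.unnecessarySimpa false
set_option maxHeartbeats 1000000
noncomputable section
open KaehlerDifferential ExteriorAlgebra

abbrev EA (F : Type) [Field F] : Type := ExteriorAlgebra F (Ω[F⁄ℤ])

section MapAux
variable (F F' : Type) [Field F] [Field F'] [Algebra F F']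

/-- Functoriality of `Ω¹_{·/ℤ}`. -/
def mOm1 : Ω[F⁄ℤ] →ₗ[F] Ω[F'⁄ℤ] := KaehlerDifferential.map ℤ ℤ F F'

/-- Functoriality of the ambient algebra of differential forms. -/
def mapEAA : EA F →+* EA F' :=
  (ExteriorAlgebra.lift F
    ⟨(LinearMap.restrictScalars F (ExteriorAlgebra.ι F')).comp (mOm1 F F'),
     fun m => by simp⟩).toRingHom

lemma mapEAA_ι (w : Ω[F⁄ℤ]) :
    mapEAA F F' (ExteriorAlgebra.ι F w) = ExteriorAlgebra.ι F' (mOm1 F F' w) := by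
  simpa [mapEAA] using ExteriorAlgebra.lift_ι_apply F _ _ w

lemma mapEAA_smul (a : F) (x : EA F) :
    mapEAA F F' (a • x) = algebraMap F F' a • mapEAA F F' x := by
  have h : mapEAA F F' (a • x) = a • mapEAA F F' x := by
    have h2 := (ExteriorAlgebra.lift F
      ⟨(LinearMap.restrictScalars F (ExteriorAlgebra.ι F')).comp (mOm1 F F'),
       fun m => by simp⟩).toLinearMap.map_smul a x
    exact h2
  rw [h]
  exact (algebraMap_smul F' a (mapEAA F F' x)).symm

lemma mapEAA_ιMulti (n : ℕ) (v : Fin n → Ω[F⁄ℤ]) :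
    mapEAA F F' (ExteriorAlgebra.ιMulti F n v)
      = ExteriorAlgebra.ιMulti F' n fun i => mOm1 F F' (v i) := by
  rw [ExteriorAlgebra.ιMulti_apply, ExteriorAlgebra.ιMulti_apply, map_list_prod]
  congr 1
  simp [List.map_ofFn, Function.comp_def, mapEAA_ι]
end MapAux

/-- The map on ambient differential-form algebras induced by a field homomorphism. -/
def mapEA {F F' : Type} [Field F] [Field F'] (φ : F →+* F') : EA F →+* EA F' :=
  letI : Algebra F F' := φ.toAlgebra
  mapEAA F F'

def dlogF {F : Type} [Field F] (b : Fˣ) : Ω[F⁄ℤ] :=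
  ((b⁻¹ : Fˣ) : F) • KaehlerDifferential.D ℤ F (b : F)

def logFormEA {F : Type} [Field F] {n : ℕ} (a : F) (b : Fin n → Fˣ) : EA F :=
  a • ExteriorAlgebra.ιMulti F n fun i => dlogF (b i)

def dWedge {F : Type} [Field F] {n : ℕ} (a : Fin n → F) : EA F :=
  ExteriorAlgebra.ιMulti F n fun i => KaehlerDifferential.D ℤ F (a i)

def OmegaS (F : Type) [Field F] (m : ℤ) : Submodule F (EA F) :=
  if 0 ≤ m then ⋀[F]^(m.toNat) (Ω[F⁄ℤ]) else ⊥

section MapAux2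
variable (F F' : Type) [Field F] [Field F'] [Algebra F F']

lemma mapEAA_pow_mem (n : ℕ) (x : EA F) (hx : x ∈ ⋀[F]^n (Ω[F⁄ℤ])) :
    mapEAA F F' x ∈ ⋀[F']^n (Ω[F'⁄ℤ]) := by
  rw [← ExteriorAlgebra.ιMulti_span_fixedDegree] at hx
  induction hx using Submodule.span_induction with
  | mem x h =>
      obtain ⟨v, rfl⟩ := h
      rw [mapEAA_ιMulti]
      exact ExteriorAlgebra.ιMulti_range F' n (Set.mem_range_self _)
  | zero => simp only [map_zero]; exact Submodule.zero_mem _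
  | add x y _ _ hx hy => rw [map_add]; exact Submodule.add_mem _ hx hy
  | smul a x _ hx =>
      rw [mapEAA_smul]
      exact Submodule.smul_mem _ _ hx

lemma mapEAA_OmegaS_mem (m : ℤ) (x : EA F) (hx : x ∈ OmegaS F m) :
    mapEAA F F' x ∈ OmegaS F' m := by
  by_cases h : 0 ≤ m
  · simp only [OmegaS, if_pos h] at hx ⊢
    exact mapEAA_pow_mem F F' _ x hx
  · simp only [OmegaS, if_neg h, Submodule.mem_bot] at hx ⊢
    rw [hx, map_zero]
end MapAux2

lemma OmegaS_cast {F : Type} [Field F] {m₁ m₂ : ℤ} (h : m₁ = m₂) {x : EA F}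
    (hx : x ∈ OmegaS F m₁) : x ∈ OmegaS F m₂ := h ▸ hx

lemma ιMulti_mem {F : Type} [Field F] (n : ℕ) (v : Fin n → Ω[F⁄ℤ]) :
    ExteriorAlgebra.ιMulti F n v ∈ OmegaS F (n : ℤ) := by
  have h := ExteriorAlgebra.ιMulti_range F n (M := Ω[F⁄ℤ]) (Set.mem_range_self v)
  simpa [OmegaS] using h

lemma logFormEA_mem {F : Type} [Field F] {n : ℕ} (a : F) (b : Fin n → Fˣ) :
    logFormEA a b ∈ OmegaS F (n : ℤ) :=
  Submodule.smul_mem _ a (ιMulti_mem n _)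

lemma dWedge_mem {F : Type} [Field F] {n : ℕ} (a : Fin n → F) :
    dWedge a ∈ OmegaS F (n : ℤ) := ιMulti_mem n _

lemma OmegaS_mul_mem {F : Type} [Field F] {m₁ m₂ : ℤ} {x y : EA F}
    (hx : x ∈ OmegaS F m₁) (hy : y ∈ OmegaS F m₂) : x * y ∈ OmegaS F (m₁ + m₂) := by
  by_cases h1 : 0 ≤ m₁
  · by_cases h2 : 0 ≤ m₂
    · have hx' : x ∈ ⋀[F]^(m₁.toNat) (Ω[F⁄ℤ]) := by simpa [OmegaS, h1] using hx
      have hy' : y ∈ ⋀[F]^(m₂.toNat) (Ω[F⁄ℤ]) := by simpa [OmegaS, h2] using hy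
      have hm : x * y ∈ ⋀[F]^(m₁.toNat + m₂.toNat) (Ω[F⁄ℤ]) := by
        rw [exteriorPower, pow_add]
        exact Submodule.mul_mem_mul hx' hy'
      have hnat : (m₁ + m₂).toNat = m₁.toNat + m₂.toNat := by omega
      simp only [OmegaS, if_pos (by omega : (0:ℤ) ≤ m₁ + m₂), hnat]
      exact hm
    · have : y = 0 := by simpa [OmegaS, h2] using hy
      simp only [this, mul_zero]
      exact Submodule.zero_mem _
  · have : x = 0 := by simpa [OmegaS, h1] using hx
    simp only [this, zero_mul]
    exact Submodule.zero_mem _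

/-- The subgroup of relations defining `H^{m+1,m}`: exact forms (the image of `d`)
and Artin--Schreier forms `(a^p - a)·dlog b₁ ∧ ⋯ ∧ dlog b_m`. -/
def relSet (p : ℕ) (F : Type) [Field F] (m : ℤ) : Set ↥(OmegaS F m) :=
  {x | (1 ≤ m ∧ ∃ a : Fin m.toNat → F, (x : EA F) = dWedge a) ∨
    (0 ≤ m ∧ ∃ (a : F) (b : Fin m.toNat → Fˣ), (x : EA F) = logFormEA (a ^ p - a) b)}

def Hsub (p : ℕ) (F : Type) [Field F] (m : ℤ) : AddSubgroup ↥(OmegaS F m) :=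
  AddSubgroup.closure (relSet p F m)

/-- `H^{m+1,m}(F)`, the cokernel of `𝒫 : Ω^m_F → Ω^m_F/dΩ^{m-1}_F`, realized as the
quotient of `Ω^m_F` by the subgroup generated by exact forms and the image of `𝒫`. -/
def Hw (p : ℕ) (F : Type) [Field F] (m : ℤ) : Type := ↥(OmegaS F m) ⧸ Hsub p F m

instance (p : ℕ) (F : Type) [Field F] (m : ℤ) : AddCommGroup (Hw p F m) :=
  inferInstanceAs (AddCommGroup (↥(OmegaS F m) ⧸ Hsub p F m))

/-- The class in `H^{m+1,m}(F)` of a differential form. -/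
def mkHw (p : ℕ) {F : Type} [Field F] {m : ℤ} (x : EA F) (hx : x ∈ OmegaS F m) : Hw p F m :=
  QuotientAddGroup.mk (⟨x, hx⟩ : ↥(OmegaS F m))

/-- The symbol `[a, b₁, …, b_n}` in `H^{n+1,n}(F)`. -/
def symbHw (p : ℕ) {F : Type} [Field F] {n : ℕ} (a : F) (b : Fin n → Fˣ) : Hw p F (n : ℤ) :=
  mkHw p (logFormEA a b) (logFormEA_mem a b)

/-- `Ω^m_{log,F}`, i.e. `H^{m,m}(F)`, the subgroup of `Ω^m_F` generated by
logarithmic forms `dlog b₁ ∧ ⋯ ∧ dlog b_m`. -/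
def HMsub (F : Type) [Field F] (m : ℤ) : AddSubgroup ↥(OmegaS F m) :=
  AddSubgroup.closure {x | ∃ b : Fin m.toNat → Fˣ, (x : EA F) = logFormEA 1 b}

/-- `H^{1,1}(F) = F^*/(F^*)^p`. -/
def H11 (p : ℕ) (F : Type) [Field F] : Type :=
  Fˣ ⧸ Subgroup.closure {x : Fˣ | ∃ y : Fˣ, x = y ^ p}

instance (p : ℕ) (F : Type) [Field F] : CommGroup (H11 p F) :=
  inferInstanceAs (CommGroup (Fˣ ⧸ Subgroup.closure {x : Fˣ | ∃ y : Fˣ, x = y ^ p}))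

/-- The class `{b}` of a unit in `H^{1,1}(F)`. -/
def H11.mk (p : ℕ) {F : Type} [Field F] (b : Fˣ) : H11 p F := QuotientGroup.mk b

/-- `H^{1,0}(F) = F/{x^p - x}`. -/
def H10 (p : ℕ) (F : Type) [Field F] : Type :=
  F ⧸ AddSubgroup.closure {x : F | ∃ y : F, x = y ^ p - y}

instance (p : ℕ) (F : Type) [Field F] : AddCommGroup (H10 p F) :=
  inferInstanceAs (AddCommGroup (F ⧸ AddSubgroup.closure {x : F | ∃ y : F, x = y ^ p - y}))

/-- The class `[a]` of a field element in `H^{1,0}(F)`. -/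
def H10.mk (p : ℕ) {F : Type} [Field F] (a : F) : H10 p F := QuotientAddGroup.mk a

section MapAux3
variable (F F' : Type) [Field F] [Field F'] [Algebra F F']

lemma mOm1_D (a : F) :
    mOm1 F F' (KaehlerDifferential.D ℤ F a)
      = KaehlerDifferential.D ℤ F' (algebraMap F F' a) :=
  KaehlerDifferential.map_D ℤ ℤ F F' a

lemma mOm1_smul (a : F) (w : Ω[F⁄ℤ]) :
    mOm1 F F' (a • w) = algebraMap F F' a • mOm1 F F' w := by
  rw [map_smul]
  exact (algebraMap_smul F' a (mOm1 F F' w)).symm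

lemma mOm1_dlog (b : Fˣ) :
    mOm1 F F' (dlogF b) = dlogF (Units.map (algebraMap F F' : F →* F') b) := by
  rw [dlogF, mOm1_smul, mOm1_D, dlogF]
  rfl

def mapOmegaS (m : ℤ) : ↥(OmegaS F m) →+ ↥(OmegaS F' m) where
  toFun := fun x => ⟨mapEAA F F' x.val, mapEAA_OmegaS_mem F F' m x.val x.2⟩
  map_zero' := by apply Subtype.ext; simp
  map_add' := by intro x y; apply Subtype.ext; simp

lemma mapEAA_logFormEA {n : ℕ} (a : F) (b : Fin n → Fˣ) :
    mapEAA F F' (logFormEA a b)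
      = logFormEA (algebraMap F F' a) (fun i => Units.map (algebraMap F F' : F →* F') (b i)) := by
  rw [logFormEA, mapEAA_smul, mapEAA_ιMulti, logFormEA]
  have h : (fun i => mOm1 F F' (dlogF (b i)))
      = fun i => dlogF (Units.map (algebraMap F F' : F →* F') (b i)) :=
    funext fun i => mOm1_dlog F F' (b i)
  rw [h]

lemma mapEAA_dWedge {n : ℕ} (a : Fin n → F) :
    mapEAA F F' (dWedge a) = dWedge fun i => algebraMap F F' (a i) := by
  rw [dWedge, mapEAA_ιMulti, dWedge]
  have h : (fun i => mOm1 F F' (KaehlerDifferential.D ℤ F (a i)))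
      = fun i => KaehlerDifferential.D ℤ F' (algebraMap F F' (a i)) :=
    funext fun i => mOm1_D F F' (a i)
  rw [h]

lemma mapOmegaS_rel (p : ℕ) (m : ℤ) :
    Hsub p F m ≤ (Hsub p F' m).comap (mapOmegaS F F' m) := by
  rw [Hsub, AddSubgroup.closure_le]
  intro x hx
  rcases hx with ⟨hm, a, ha⟩ | ⟨hm, a, b, hab⟩
  · apply AddSubgroup.subset_closure
    left
    refine ⟨hm, fun i => algebraMap F F' (a i), ?_⟩
    show mapEAA F F' x.val = _
    rw [ha, mapEAA_dWedge]
  · apply AddSubgroup.subset_closure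
    right
    refine ⟨hm, algebraMap F F' a, fun i => Units.map (algebraMap F F' : F →* F') (b i), ?_⟩
    show mapEAA F F' x.val = _
    rw [hab, mapEAA_logFormEA, map_sub, map_pow]

def mapHw (p : ℕ) (m : ℤ) : Hw p F m →+ Hw p F' m :=
  QuotientAddGroup.map (Hsub p F m) (Hsub p F' m) (mapOmegaS F F' m) (mapOmegaS_rel F F' p m)

lemma mapOmegaS_HM (m : ℤ) (x : ↥(OmegaS F m)) (hx : x ∈ HMsub F m) :
    mapOmegaS F F' m x ∈ HMsub F' m := by
  induction hx using AddSubgroup.closure_induction with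
  | mem x h =>
      obtain ⟨b, hb⟩ := h
      apply AddSubgroup.subset_closure
      refine ⟨fun i => Units.map (algebraMap F F' : F →* F') (b i), ?_⟩
      show mapEAA F F' x.val = _
      rw [hb, mapEAA_logFormEA, map_one]
  | zero => simpa using AddSubgroup.zero_mem _
  | add x y _ _ hx hy => rw [map_add]; exact AddSubgroup.add_mem _ hx hy
  | neg x _ hx => rw [map_neg]; exact AddSubgroup.neg_mem _ hx

def mapHM (m : ℤ) : ↥(HMsub F m) →+ ↥(HMsub F' m) where
  toFun := fun x => ⟨mapOmegaS F F' m x.val, mapOmegaS_HM F F' m x.val x.2⟩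
  map_zero' := by apply Subtype.ext; simp
  map_add' := by intro x y; apply Subtype.ext; simp

end MapAux3

/-- The map induced by a field homomorphism on ambient differential forms. -/
def pushEA {F F' : Type} [Field F] [Field F'] (φ : F →+* F') : EA F →+* EA F' :=
  letI : Algebra F F' := φ.toAlgebra
  mapEAA F F'

/-- The map `Ω^m_F → Ω^m_{F'}` induced by a field homomorphism. -/
def pushOmegaS {F F' : Type} [Field F] [Field F'] (φ : F →+* F') (m : ℤ) :
    ↥(OmegaS F m) →+ ↥(OmegaS F' m) :=
  letI : Algebra F F' := φ.toAlgebra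
  mapOmegaS F F' m

/-- The map `H^{m+1,m}(F) → H^{m+1,m}(F')` induced by a field homomorphism. -/
def pushHw (p : ℕ) {F F' : Type} [Field F] [Field F'] (φ : F →+* F') (m : ℤ) :
    Hw p F m →+ Hw p F' m :=
  letI : Algebra F F' := φ.toAlgebra
  mapHw F F' p m

/-- The map `H^{m,m}(F) → H^{m,m}(F')` induced by a field homomorphism. -/
def pushHM {F F' : Type} [Field F] [Field F'] (φ : F →+* F') (m : ℤ) :
    ↥(HMsub F m) →+ ↥(HMsub F' m) :=
  letI : Algebra F F' := φ.toAlgebra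
  mapHM F F' m

/-- `dlog b₁ ∧ ⋯ ∧ dlog b_t`. -/
def dlogProd {F : Type} [Field F] (t : ℕ) (b : Fin t → Fˣ) : EA F :=
  ExteriorAlgebra.ιMulti F t fun i => dlogF (b i)

lemma dlogProd_mem {F : Type} [Field F] (t : ℕ) (b : Fin t → Fˣ) :
    dlogProd t b ∈ OmegaS F (t : ℤ) := ιMulti_mem t _

/-- The product `[a, b₁, …, b_t} · (class of ω)` in `H^{mt+1,mt}(F)`,
where `ω` is a differential form of degree `j` and `t + j = mt`. -/
def genHw (p : ℕ) {F : Type} [Field F] {t : ℕ} {j mt : ℤ} (h : (t : ℤ) + j = mt)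
    (a : F) (b : Fin t → Fˣ) (ω : EA F) (hω : ω ∈ OmegaS F j) : Hw p F mt :=
  mkHw p (a • (dlogProd t b * ω))
    (OmegaS_cast h (Submodule.smul_mem _ a (OmegaS_mul_mem (dlogProd_mem t b) hω)))

/-- The product `(class of ω)·{b₁}⋯{b_t}` in `H^{mt+1,mt}(F)`. -/
def mulSymbHw (p : ℕ) {F : Type} [Field F] {t : ℕ} {j mt : ℤ} (h : j + (t : ℤ) = mt)
    (ω : EA F) (hω : ω ∈ OmegaS F j) (b : Fin t → Fˣ) : Hw p F mt :=
  mkHw p (ω * dlogProd t b) (OmegaS_cast h (OmegaS_mul_mem hω (dlogProd_mem t b)))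

/-- The product `[a] · (class of ω)` in `H^{j+1,j}(F)`. -/
def smulHw (p : ℕ) {F : Type} [Field F] {j : ℤ} (a : F) (ω : EA F) (hω : ω ∈ OmegaS F j) :
    Hw p F j :=
  mkHw p (a • ω) (Submodule.smul_mem _ a hω)


/-!
Both sides of an operation are compared after passing to the separable closure `E'` of a field
`E` over `k`. There `H^{m+1,m}(E')` vanishes: `Ω^m_{E'}` is spanned by the forms
`a · dlog b₁ ∧ ⋯ ∧ dlog b_m`, and every `a` is of the form `α^p - α` because `E'` is separably
closed. On the other hand `Ω^r_E → Ω^r_{E'}` is injective, since for the separable (hence formally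
étale) extension `E'/E` the module `Ω¹_{E'}` is the base change of `Ω¹_E`. Naturality along
`E → E'` therefore forces `θ_E(x) = θ_E(0)`, and `θ_E(0)` is the image of `θ_k(0)`.
-/

theorem IsSepClosed.surjective_pow_sub_self (p : ℕ) (F : Type) [Field F] [CharP F p]
    [IsSepClosed F] : Function.Surjective fun α : F => α ^ p - α := by
  open Polynomial in
  intro c
  let f : F[X] := X ^ p - X - C c
  have hder : derivative f = -1 := by simp [f, derivative_X_pow, CharP.cast_eq_zero]
  have hsep : f.Separable := by
    rw [separable_def, hder]
    exact isCoprime_one_right.neg_right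
  have hdeg : f.degree ≠ 0 := fun h => by
    rw [eq_C_of_degree_eq_zero h, derivative_C] at hder
    simp at hder
  obtain ⟨α, hα⟩ := IsSepClosed.exists_root f hdeg hsep
  exact ⟨α, by simpa [f, sub_eq_zero] using hα⟩

theorem span_range_dlogF (F : Type) [Field F] :
    Submodule.span F (Set.range (dlogF (F := F))) = ⊤ := by
  rw [eq_top_iff, ← KaehlerDifferential.span_range_derivation ℤ F, Submodule.span_le]
  rintro _ ⟨a, rfl⟩
  rcases eq_or_ne a 0 with rfl | ha
  · simp
  · have hD : KaehlerDifferential.D ℤ F a = a • dlogF (Units.mk0 a ha) := by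
      simp [dlogF, smul_smul, ha]
    rw [hD]
    exact Submodule.smul_mem _ a (Submodule.subset_span ⟨_, rfl⟩)

theorem Hsub_eq_top {p : ℕ} {F : Type} [Field F]
    (hAS : Function.Surjective fun α : F => α ^ p - α) (m : ℕ) : Hsub p F m = ⊤ := by
  let G := (Hsub p F m).map (OmegaS F m).subtype.toAddMonoidHom
  have hgen : ∀ (c : F) (b : Fin m → Fˣ), logFormEA c b ∈ G := by
    intro c b
    obtain ⟨α, rfl⟩ := hAS c
    exact ⟨⟨_, logFormEA_mem _ b⟩,
      AddSubgroup.subset_closure (Or.inr ⟨Int.natCast_nonneg m, α, b, rfl⟩), rfl⟩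
  have hspan : (⋀[F]^m (Ω[F⁄ℤ])).toAddSubmonoid ≤ G.toAddSubmonoid := by
    rw [← exteriorPower.ιMulti_span_fixedDegree_of_span_eq_top F m _ (span_range_dlogF F),
      Submodule.span_eq_closure, AddSubmonoid.closure_le]
    rintro _ ⟨c, -, _, ⟨v, hv, rfl⟩, rfl⟩
    choose b hb using Set.range_subset_iff.mp hv
    obtain rfl : v = fun i => dlogF (b i) := funext fun i => (hb i).symm
    exact hgen c b
  refine eq_top_iff.mpr fun y _ => ?_
  obtain ⟨z, hz, hzy⟩ :=
    hspan (show (y : EA F) ∈ ⋀[F]^m (Ω[F⁄ℤ]) by simpa [OmegaS] using y.2)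
  rwa [← Subtype.ext hzy]

theorem Hw_eq_zero {p : ℕ} {F : Type} [Field F]
    (hAS : Function.Surjective fun α : F => α ^ p - α) {m : ℕ} (x : Hw p F m) : x = 0 := by
  induction x using QuotientAddGroup.induction_on with
  | H y => exact (QuotientAddGroup.eq_zero_iff y).mpr (Hsub_eq_top hAS m ▸ AddSubgroup.mem_top y)

section Separable

variable (E E' : Type) [Field E] [Field E'] [Algebra E E'] [Algebra.IsSeparable E E']

theorem mapEAA_injective : Function.Injective (mapEAA E E') := by
  classical
  let : LinearOrder (Module.Basis.ofVectorSpaceIndex E (Ω[E⁄ℤ])) :=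
    linearOrderOfSTO WellOrderingRel
  have := Algebra.FormallyEtale.of_isSeparable E E'
  let e := Module.Basis.ofVectorSpace E (Ω[E⁄ℤ])
  let e' := (KaehlerDifferential.isBaseChange_of_formallyEtale ℤ E E').basis e
  let f : EA E →ₗ[E] EA E' :=
    { toFun := mapEAA E E'
      map_add' := map_add _
      map_smul' := fun a x => by rw [mapEAA_smul, algebraMap_smul]; rfl }
  have hfe : f ∘ e.ExteriorAlgebra = e'.ExteriorAlgebra := by
    ext s
    simp only [Function.comp_apply, ExteriorAlgebra.basis_apply, f, LinearMap.coe_mk,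
      AddHom.coe_mk, mapEAA_ιMulti]
    congr 1
    ext i
    simp [e', IsBaseChange.basis_apply, mOm1]
  exact LinearMap.injective_of_linearIndependent e.ExteriorAlgebra.span_eq
    (hfe ▸ e'.ExteriorAlgebra.linearIndependent.restrict_scalars' E)

theorem mapOmegaS_injective (m : ℤ) : Function.Injective (mapOmegaS E E' m) :=
  fun _ _ h => Subtype.ext (mapEAA_injective E E' (congrArg Subtype.val h))

theorem mapHM_injective (m : ℤ) : Function.Injective (mapHM E E' m) :=
  fun _ _ h => Subtype.ext (mapOmegaS_injective E E' m (congrArg Subtype.val h))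

end Separable

theorem pushHM_algebraMap (E E' : Type) [Field E] [Field E'] [Algebra E E'] (m : ℤ) :
    pushHM (algebraMap E E') m = mapHM E E' m := by
  rw [pushHM, Algebra.algebra_ext (algebraMap E E').toAlgebra ‹_› fun _ => rfl]

theorem stmt19_general (p : ℕ) (k : Type) [Field k] [CharP k p] (m r : ℕ)
    (θ : ∀ (E : Type) [Field E] [Algebra k E], Hw p E (m : ℤ) → ↥(HMsub E (r : ℤ)))
    (hθ : ∀ (E E' : Type) [Field E] [Algebra k E] [Field E'] [Algebra k E']
        (σ : E →ₐ[k] E') (x : Hw p E (m : ℤ)),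
      θ E' (pushHw p σ.toRingHom (m : ℤ) x) = pushHM σ.toRingHom (r : ℤ) (θ E x)) :
    (∃ c : ↥(HMsub k (r : ℤ)), ∀ (E : Type) [Field E] [Algebra k E] (x : Hw p E (m : ℤ)),
      θ E x = pushHM (algebraMap k E) (r : ℤ) c) ∧
    ((∀ (E : Type) [Field E] [Algebra k E], θ E 0 = 0) →
      ∀ (E : Type) [Field E] [Algebra k E] (x : Hw p E (m : ℤ)), θ E x = 0) := by
  have hconst : ∀ (E : Type) [Field E] [Algebra k E] (x : Hw p E m), θ E x = θ E 0 := by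
    intro E _ _ x
    let σ := IsScalarTower.toAlgHom k E (SeparableClosure E)
    have : CharP (SeparableClosure E) p :=
      charP_of_injective_algebraMap (algebraMap k (SeparableClosure E)).injective p
    have hzero := Hw_eq_zero (m := m) (IsSepClosed.surjective_pow_sub_self p (SeparableClosure E))
    have hx := hθ E _ σ x
    have h0 := hθ E _ σ 0
    rw [hzero (pushHw p _ m x)] at hx
    rw [hzero (pushHw p _ m 0)] at h0
    refine mapHM_injective E (SeparableClosure E) r ?_
    rw [← pushHM_algebraMap]
    exact hx.symm.trans h0
  refine ⟨⟨θ k 0, fun E _ _ x => ?_⟩, fun hnorm E _ _ x => (hconst E x).trans (hnorm E)⟩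
  rw [hconst E x, ← map_zero (pushHw p (Algebra.ofId k E).toRingHom m), hθ k E (Algebra.ofId k E)]
  rfl

/-- Every operation `H^{m+1,m} → H^{r,r}` on fields over a field `k` of
characteristic `p > 0` is constant; in particular every normalized such operation is
zero. -/
theorem stmt19 (p : ℕ) [Fact p.Prime] (k : Type) [Field k] [CharP k p] (m r : ℕ)
    (θ : ∀ (E : Type) [Field E] [Algebra k E], Hw p E (m : ℤ) → ↥(HMsub E (r : ℤ)))
    (hθ : ∀ (E E' : Type) [Field E] [Algebra k E] [Field E'] [Algebra k E']
        (σ : E →ₐ[k] E') (x : Hw p E (m : ℤ)),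
      θ E' (pushHw p σ.toRingHom (m : ℤ) x) = pushHM σ.toRingHom (r : ℤ) (θ E x)) :
    (∃ c : ↥(HMsub k (r : ℤ)), ∀ (E : Type) [Field E] [Algebra k E] (x : Hw p E (m : ℤ)),
      θ E x = pushHM (algebraMap k E) (r : ℤ) c) ∧
    ((∀ (E : Type) [Field E] [Algebra k E], θ E 0 = 0) →
      ∀ (E : Type) [Field E] [Algebra k E] (x : Hw p E (m : ℤ)), θ E x = 0) :=
  stmt19_general p k m r θ hθ
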